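/- Let k be a field, n a natural number, and R_n = k[t]/(t^{n+1}) the truncated polynomial ring. Let A be a smooth R_n-algebra (i.e. formally smooth and of finite presentation over R_n) and let A_0 = A ⊗_{R_n} k be its special fibre. Then there exists an isomorphism of R_n-algebras A ≅ A_0 ⊗_k R_n. (Deformations of smooth affine schemes over the truncated polynomial ring are trivial.) -/

import Mathlib

/-!
Let `I = (t)`, the kernel of `R_n → k`; it is nilpotent. Both `A` and `B = R_n ⊗_k A_0` are
formally smooth `R_n`-algebras mapping onto `A_0` with kernel inside `I·A`, resp. `I·B`.
Formal smoothness of `A` lifts `A → A_0` through `B → A_0` to `f : A → B`; by Nakayama's lemma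
for the nilpotent ideal `I` (which needs no finiteness) `f` is surjective, and its kernel lies
in `I·A`, so it is nilpotent. Formal smoothness of `B` then gives a section `s` of `f`, which is
injective, and surjective by Nakayama again.
-/

open Polynomial TensorProduct

noncomputable section

/-- The truncated polynomial ring `R_n = k[t]/(t^{n+1})`. -/
abbrev TruncPoly (k : Type) [Field k] (n : ℕ) : Type :=
  Polynomial k ⧸ Ideal.span {(X : Polynomial k) ^ (n + 1)}

/-- `R_n → k`, evaluation at `t = 0`, makes `k` an `R_n`-algebra; it splits the
structure map `k → R_n`. -/
noncomputable instance TruncPoly.residueAlgebra (k : Type) [Field k] (n : ℕ) :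
    Algebra (TruncPoly k n) k :=
  RingHom.toAlgebra <| Ideal.Quotient.lift _ (aeval (0 : k)).toRingHom <| by
    intro a ha
    rw [Ideal.mem_span_singleton] at ha
    obtain ⟨c, rfl⟩ := ha
    simp

theorem Submodule.eq_top_of_sup_smul_top_of_isNilpotent {R M : Type*} [CommRing R]
    [AddCommGroup M] [Module R M] {I : Ideal R} (hI : IsNilpotent I) {N : Submodule R M}
    (h : N ⊔ I • ⊤ = ⊤) : N = ⊤ := by
  obtain ⟨m, hm⟩ := hI
  have key (j : ℕ) : N ⊔ I ^ j • ⊤ = ⊤ := by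
    induction j with
    | zero => simp
    | succ j ih =>
      apply top_unique
      calc ⊤ = N ⊔ I ^ j • (N ⊔ I • ⊤) := by rw [h, ih]
        _ ≤ N ⊔ I ^ (j + 1) • ⊤ := by
          rw [Submodule.smul_sup, ← sup_assoc, pow_succ, Submodule.mul_smul]
          exact sup_le_sup_right (sup_le le_rfl Submodule.smul_le_right) _
  simpa [hm] using key m

theorem Ideal.isNilpotent_of_le_map {R S : Type*} [CommRing R] [CommRing S] (f : R →+* S)
    {I : Ideal R} (hI : IsNilpotent I) {J : Ideal S} (h : J ≤ I.map f) : IsNilpotent J := by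
  obtain ⟨m, hm⟩ := hI
  refine ⟨m, le_bot_iff.mp ?_⟩
  calc J ^ m ≤ I.map f ^ m := Ideal.pow_right_mono h m
    _ = ⊥ := by rw [← Ideal.map_pow, hm, Ideal.zero_eq_bot, Ideal.map_bot]

section FormallySmooth

variable {R A B : Type*} [CommRing R] [CommRing A] [CommRing B] [Algebra R A] [Algebra R B]

theorem AlgHom.surjective_of_isNilpotent {I : Ideal R} (hI : IsNilpotent I) (f : A →ₐ[R] B)
    (h : ∀ b, ∃ a, b - f a ∈ I.map (algebraMap R B)) : Function.Surjective f := by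
  refine (LinearMap.range_eq_top (f := f.toLinearMap)).mp <|
    Submodule.eq_top_of_sup_smul_top_of_isNilpotent hI (top_unique fun b _ => ?_)
  obtain ⟨a, ha⟩ := h b
  rw [Ideal.smul_top_eq_map]
  exact Submodule.mem_sup.mpr ⟨f a, ⟨a, rfl⟩, b - f a, ha, add_sub_cancel _ _⟩

theorem Algebra.FormallySmooth.nonempty_algEquiv_of_ker_le_map {C : Type*} [CommRing C]
    [Algebra R C] [FormallySmooth R A] [FormallySmooth R B]
    {I : Ideal R} (hI : IsNilpotent I) (p : A →ₐ[R] C) (q : B →ₐ[R] C)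
    (hp : Function.Surjective p) (hq : Function.Surjective q)
    (hpI : RingHom.ker p ≤ I.map (algebraMap R A))
    (hqI : RingHom.ker q ≤ I.map (algebraMap R B)) :
    Nonempty (A ≃ₐ[R] B) := by
  let f := liftOfSurjective p q hq (Ideal.isNilpotent_of_le_map _ hI hqI)
  have hqf (a : A) : q (f a) = p a := liftOfSurjective_apply _ _ _ _ a
  have hf : Function.Surjective f := f.surjective_of_isNilpotent hI fun b => by
    obtain ⟨a, ha⟩ := hp (q b)
    exact ⟨a, hqI (by simp [hqf, ha])⟩
  have hkerf : RingHom.ker f ≤ I.map (algebraMap R A) := fun a ha =>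
    hpI (by simp_all [← hqf])
  let s := liftOfSurjective (AlgHom.id R B) f hf (Ideal.isNilpotent_of_le_map _ hI hkerf)
  have hfs (b : B) : f (s b) = b := liftOfSurjective_apply _ _ _ _ b
  have hs : Function.Surjective s := s.surjective_of_isNilpotent hI fun a =>
    ⟨f a, hkerf (by simp [hfs])⟩
  exact ⟨(AlgEquiv.ofBijective s ⟨Function.LeftInverse.injective hfs, hs⟩).symm⟩

end FormallySmooth

theorem Algebra.TensorProduct.ker_includeRight_le {R : Type*} (S : Type*) {A : Type*}
    [CommRing R] [CommRing S] [CommRing A] [Algebra R S] [Algebra R A]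
    (h : Function.Surjective (algebraMap R S)) :
    RingHom.ker (includeRight : A →ₐ[R] S ⊗[R] A) ≤
      (RingHom.ker (algebraMap R S)).map (algebraMap R A) := by
  intro a ha
  have h1 : (1 : R) ⊗ₜ[R] a ∈ RingHom.ker (map (Algebra.ofId R S) (AlgHom.id R A)) := by
    simpa [RingHom.mem_ker] using ha
  rw [rTensor_ker _ h] at h1
  have hle : (RingHom.ker (Algebra.ofId R S)).map (includeLeft : R →ₐ[R] R ⊗[R] A) ≤
      ((RingHom.ker (algebraMap R S)).map (algebraMap R A)).comap
        (Algebra.TensorProduct.lid R A) := by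
    rw [Ideal.map_le_iff_le_comap]
    intro r hr
    simpa [Algebra.algebraMap_eq_smul_one] using
      Ideal.mem_map_of_mem (algebraMap R A) (show r ∈ RingHom.ker (algebraMap R S) from hr)
  simpa using hle h1

section Retraction

/- `IsScalarTower k R k` says that `R → k` is a retraction of the structure map `k → R`. -/
variable {R k : Type*} [CommRing R] [CommRing k] [Algebra k R] [Algebra R k]
  [IsScalarTower k R k]

theorem algebraMap_surjective_of_isScalarTower : Function.Surjective (algebraMap R k) :=
  fun c => ⟨algebraMap k R c, by simp [← IsScalarTower.algebraMap_apply]⟩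

theorem Algebra.TensorProduct.ker_productLeftAlgHom_ofId_le (C : Type*) [CommRing C]
    [Algebra k C] [Algebra R C] [IsScalarTower k R C] [IsScalarTower R k C] :
    RingHom.ker (productLeftAlgHom (Algebra.ofId R C) (AlgHom.id k C)) ≤
      (RingHom.ker (algebraMap R k)).map (algebraMap R (R ⊗[k] C)) := by
  -- `R` acts on `C` through `k`, so `r ⊗ c ↦ r • c` factors through `k ⊗[k] C ≃ C`.
  have hfactor : (Algebra.TensorProduct.lid k C).toAlgHom.comp
        (map (IsScalarTower.toAlgHom k R k) (AlgHom.id k C)) =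
      (productLeftAlgHom (Algebra.ofId R C) (AlgHom.id k C)).restrictScalars k := by
    ext r
    · simp [Algebra.smul_def, IsScalarTower.algebraMap_apply R k C]
    · simp
  intro x hx
  have hx' : x ∈ RingHom.ker (map (IsScalarTower.toAlgHom k R k) (AlgHom.id k C)) := by
    rw [RingHom.mem_ker, ← (Algebra.TensorProduct.lid k C).map_eq_zero_iff]
    simpa using (AlgHom.congr_fun hfactor x).trans hx
  rwa [rTensor_ker _ algebraMap_surjective_of_isScalarTower] at hx'

theorem Algebra.FormallySmooth.nonempty_algEquiv_baseChange_of_retraction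
    (hI : IsNilpotent (RingHom.ker (algebraMap R k)))
    (A : Type*) [CommRing A] [Algebra R A] [FormallySmooth R A] :
    Nonempty (A ≃ₐ[R] R ⊗[k] (k ⊗[R] A)) := by
  let q : R ⊗[k] (k ⊗[R] A) →ₐ[R] k ⊗[R] A :=
    TensorProduct.productLeftAlgHom (Algebra.ofId R _) (AlgHom.id k _)
  have hq : Function.Surjective q := fun c =>
    ⟨1 ⊗ₜ c, by simp [q, ← Algebra.TensorProduct.one_def]⟩
  have hsurj : Function.Surjective (algebraMap R k) := algebraMap_surjective_of_isScalarTower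
  exact nonempty_algEquiv_of_ker_le_map hI _ q (TensorProduct.includeRight_surjective A hsurj) hq
    (TensorProduct.ker_includeRight_le k hsurj) (TensorProduct.ker_productLeftAlgHom_ofId_le _)

end Retraction

namespace TruncPoly

variable (k : Type) [Field k] (n : ℕ)

theorem algebraMap_mk (p : k[X]) :
    algebraMap (TruncPoly k n) k (Ideal.Quotient.mk _ p) = p.eval 0 := by
  show Ideal.Quotient.lift _ _ _ _ = _
  simp [Ideal.Quotient.lift_mk]

instance : IsScalarTower k (TruncPoly k n) k :=
  IsScalarTower.of_algebraMap_eq (R := k) (S := TruncPoly k n) (A := k) fun c => by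
    show c = algebraMap (TruncPoly k n) k (Ideal.Quotient.mk _ (C c))
    simp [algebraMap_mk]

theorem isNilpotent_ker_algebraMap :
    IsNilpotent (RingHom.ker (algebraMap (TruncPoly k n) k)) := by
  refine ⟨n + 1, le_bot_iff.mp ?_⟩
  have hker : RingHom.ker (algebraMap (TruncPoly k n) k) ≤
      Ideal.span {Ideal.Quotient.mk _ X} := by
    intro x hx
    obtain ⟨p, rfl⟩ := Ideal.Quotient.mk_surjective x
    rw [RingHom.mem_ker, algebraMap_mk, ← coeff_zero_eq_eval_zero, ← X_dvd_iff] at hx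
    exact Ideal.mem_span_singleton.mpr (map_dvd _ hx)
  calc _ ≤ Ideal.span {Ideal.Quotient.mk _ X} ^ (n + 1) := Ideal.pow_right_mono hker _
    _ = ⊥ := by
      rw [Ideal.span_singleton_pow, ← map_pow, Ideal.Quotient.eq_zero_iff_mem.mpr
        (Ideal.mem_span_singleton_self _), Ideal.span_singleton_eq_bot.mpr rfl]

end TruncPoly

theorem smooth_deformation_trivial_general (k : Type) [Field k] (n : ℕ)
    (A : Type) [CommRing A] [Algebra (TruncPoly k n) A]
    [Algebra.FormallySmooth (TruncPoly k n) A] :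
    Nonempty (A ≃ₐ[TruncPoly k n]
      (TruncPoly k n ⊗[k] (k ⊗[TruncPoly k n] A))) :=
  Algebra.FormallySmooth.nonempty_algEquiv_baseChange_of_retraction
    (TruncPoly.isNilpotent_ker_algebraMap k n) A

/-- Deformations of smooth affine schemes over the truncated polynomial ring
`R_n = k[t]/(t^{n+1})` are trivial: any smooth (formally smooth and finitely presented)
`R_n`-algebra `A` with special fibre `A_0 = A ⊗_{R_n} k` is isomorphic, as an
`R_n`-algebra, to `A_0 ⊗_k R_n`. -/
theorem smooth_deformation_trivial (k : Type) [Field k] (n : ℕ)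
    (A : Type) [CommRing A] [Algebra (TruncPoly k n) A]
    [Algebra.FormallySmooth (TruncPoly k n) A]
    [Algebra.FinitePresentation (TruncPoly k n) A] :
    Nonempty (A ≃ₐ[TruncPoly k n]
      (TruncPoly k n ⊗[k] (k ⊗[TruncPoly k n] A))) :=
  smooth_deformation_trivial_general k n A

end
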